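/- arXiv:1908.00049 — 2 statements merged into one kernel-verified Lean document; each statement's English description precedes it below -/
import Mathlib

section
/- Let g be an automorphism of order 4 of an elliptic curve E over a field K (fixing the origin), with 4 invertible in K. Then E(K) contains an element of order 2. -/
open Classical in
/-- Lemma 2.3(a): if an elliptic curve `E` over a field `K` in which `4` is invertible admits
an automorphism of order `4` fixing the origin (realized as an admissible change of variables
preserving the Weierstrass equation), then `E(K)` contains an element of order `2`. -/
theorem stmt_3 {K : Type*} [Field K] (h4 : (4 : K) ≠ 0)
    (W : WeierstrassCurve K) [W.IsElliptic]
    (g : WeierstrassCurve.VariableChange K)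
    (hg : g • W = W) (hord : orderOf g = 4) :
    ∃ P : W.toAffine.Point, addOrderOf P = 2 := by
  have h2 : (2 : K) ≠ 0 := by
    intro h
    exact h4 (by rw [show (4 : K) = 2 * 2 by norm_num, h, mul_zero])
  -- g ^ 4 = 1
  have h4g : g ^ 4 = 1 := by rw [← hord]; exact pow_orderOf_eq_one g
  have h44 : (g * g) * (g * g) = 1 := by
    rw [← pow_two g, ← pow_add]; norm_num; exact h4g
  -- component equations of (g*g)*(g*g) = 1
  have hrEq : ((g.r * (g.u : K) ^ 2 + g.r) * ((g.u : K) * (g.u : K)) ^ 2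
      + (g.r * (g.u : K) ^ 2 + g.r) : K) = 0 :=
    congrArg WeierstrassCurve.VariableChange.r h44
  have hsEq : (((g.u : K) * (g.u : K)) * ((g.u : K) * g.s + g.s)
      + ((g.u : K) * g.s + g.s) : K) = 0 :=
    congrArg WeierstrassCurve.VariableChange.s h44
  have htEq : ((g.t * (g.u : K) ^ 3 + g.r * g.s * (g.u : K) ^ 2 + g.t) * ((g.u : K) * (g.u : K)) ^ 3
      + (g.r * (g.u : K) ^ 2 + g.r) * ((g.u : K) * g.s + g.s) * ((g.u : K) * (g.u : K)) ^ 2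
      + (g.t * (g.u : K) ^ 3 + g.r * g.s * (g.u : K) ^ 2 + g.t) : K) = 0 :=
    congrArg WeierstrassCurve.VariableChange.t h44
  have huEq : ((g.u : K) * (g.u : K)) * ((g.u : K) * (g.u : K)) = 1 :=
    congrArg (fun c : WeierstrassCurve.VariableChange K => (c.u : K)) h44
  have hu0 : (g.u : K) ≠ 0 := g.u.ne_zero
  -- u^2 = 1 or u^2 = -1
  have hcases : (g.u : K) ^ 2 = 1 ∨ (g.u : K) ^ 2 = -1 := by
    have : ((g.u : K) ^ 2 - 1) * ((g.u : K) ^ 2 + 1) = 0 := by linear_combination huEq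
    rcases mul_eq_zero.mp this with h | h
    · exact Or.inl (by linear_combination h)
    · exact Or.inr (by linear_combination h)
  rcases hcases with huK | hu2
  · -- u^2 = 1 leads to g^2 = 1, contradicting order 4
    exfalso
    have hr0 : g.r = 0 := by
      have h4r : (4 : K) * g.r = 0 := by
        linear_combination hrEq - g.r * ((g.u : K) ^ 4 + 2 * (g.u : K) ^ 2 + 3) * huK
      rcases mul_eq_zero.mp h4r with h | h
      · exact absurd h h4
      · exact h
    have hs0 : (g.u : K) * g.s + g.s = 0 := by
      have h2s : (2 : K) * ((g.u : K) * g.s + g.s) = 0 := by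
        linear_combination hsEq - ((g.u : K) * g.s + g.s) * huK
      rcases mul_eq_zero.mp h2s with h | h
      · exact absurd h h2
      · exact h
    have ht0 : g.t * (g.u : K) ^ 3 + g.r * g.s * (g.u : K) ^ 2 + g.t = 0 := by
      rw [hr0] at htEq ⊢
      have h2t : (2 : K) * (g.t * (g.u : K) ^ 3 + 0 * g.s * (g.u : K) ^ 2 + g.t) = 0 := by
        linear_combination htEq
          - (g.t * (g.u : K) ^ 3 + g.t) * ((g.u : K) ^ 4 + (g.u : K) ^ 2 + 1) * huK
      rcases mul_eq_zero.mp h2t with h | h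
      · exact absurd h h2
      · exact h
    have hg2 : g * g = 1 := by
      ext
      · show (g.u : K) * (g.u : K) = 1
        linear_combination huK
      · show g.r * (g.u : K) ^ 2 + g.r = 0
        rw [hr0]; ring
      · exact hs0
      · exact ht0
    have : orderOf g ∣ 2 := orderOf_dvd_of_pow_eq_one (by rw [pow_two]; exact hg2)
    rw [hord] at this
    omega
  · -- main case : u^2 = -1
    have hinv : ((g.u⁻¹ : Kˣ) : K) = -(g.u : K) := by
      have ha : ((g.u⁻¹ : Kˣ) : K) * (g.u : K) = 1 := by
        rw [← Units.val_mul, inv_mul_cancel, Units.val_one]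
      have hb : (-(g.u : K)) * (g.u : K) = 1 := by linear_combination -hu2
      exact mul_right_cancel₀ hu0 (ha.trans hb.symm)
    -- the coefficient equations
    have e1 : -(g.u : K) * (W.a₁ + 2 * g.s) = W.a₁ := by
      have := congrArg WeierstrassCurve.a₁ hg
      rwa [WeierstrassCurve.variableChange_a₁, hinv] at this
    have e2 : (-(g.u : K)) ^ 2 * (W.a₂ - g.s * W.a₁ + 3 * g.r - g.s ^ 2) = W.a₂ := by
      have := congrArg WeierstrassCurve.a₂ hg
      rwa [WeierstrassCurve.variableChange_a₂, hinv] at this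
    have e3 : (-(g.u : K)) ^ 3 * (W.a₃ + g.r * W.a₁ + 2 * g.t) = W.a₃ := by
      have := congrArg WeierstrassCurve.a₃ hg
      rwa [WeierstrassCurve.variableChange_a₃, hinv] at this
    have e6 : (-(g.u : K)) ^ 6 * (W.a₆ + g.r * W.a₄ + g.r ^ 2 * W.a₂ + g.r ^ 3 - g.t * W.a₃
        - g.t ^ 2 - g.r * g.t * W.a₁) = W.a₆ := by
      have := congrArg WeierstrassCurve.a₆ hg
      rwa [WeierstrassCurve.variableChange_a₆, hinv] at this
    have hs : 2 * g.s = W.a₁ * ((g.u : K) - 1) := by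
      linear_combination (g.u : K) * e1 + (W.a₁ + 2 * g.s) * hu2
    have ht : 2 * g.t = -(1 + (g.u : K)) * W.a₃ - g.r * W.a₁ := by
      linear_combination (-(g.u : K)) * e3
        + (W.a₃ + g.r * W.a₁ + 2 * g.t) * (1 - (g.u : K) ^ 2) * hu2
    have R2 : W.a₁ ^ 2 + 4 * W.a₂ + 6 * g.r = 0 := by
      have h2R : (2 : K) * (W.a₁ ^ 2 + 4 * W.a₂ + 6 * g.r) = 0 := by
        linear_combination (-4) * e2 + (2 * g.s + W.a₁ * ((g.u : K) + 1)) * hs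
          + (4 * (W.a₂ - g.s * W.a₁ + 3 * g.r - g.s ^ 2) + W.a₁ ^ 2) * hu2
      rcases mul_eq_zero.mp h2R with h | h
      · exact absurd h h2
      · exact h
    have R6 : 8 * W.a₆ + 4 * g.r * W.a₄ + 4 * g.r ^ 2 * W.a₂ + 4 * g.r ^ 3 + 2 * W.a₃ ^ 2
        + 2 * g.r * W.a₁ * W.a₃ + g.r ^ 2 * W.a₁ ^ 2 = 0 := by
      linear_combination (-4) * e6
        + (4 * (W.a₆ + g.r * W.a₄ + g.r ^ 2 * W.a₂ + g.r ^ 3 - g.t * W.a₃ - g.t ^ 2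
            - g.r * g.t * W.a₁) * ((g.u : K) ^ 4 - (g.u : K) ^ 2 + 1) + W.a₃ ^ 2) * hu2
        + (2 * g.t + (1 - (g.u : K)) * W.a₃ + g.r * W.a₁) * ht
    -- the 2-torsion point
    have heq : W.toAffine.Equation (g.r / 2) (-(2 * W.a₃ + g.r * W.a₁) / 4) := by
      rw [WeierstrassCurve.Affine.equation_iff]
      simp only [WeierstrassCurve.toAffine]
      field_simp
      linear_combination (-16 : K) * R6 + 8 * g.r ^ 2 * R2
    have hΔ : W.toAffine.Δ ≠ 0 := W.isUnit_Δ.ne_zero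
    have hns : W.toAffine.Nonsingular (g.r / 2) (-(2 * W.a₃ + g.r * W.a₁) / 4) :=
      (W.toAffine.equation_iff_nonsingular_of_Δ_ne_zero hΔ).mp heq
    have hy : (-(2 * W.a₃ + g.r * W.a₁) / 4 : K)
        = W.toAffine.negY (g.r / 2) (-(2 * W.a₃ + g.r * W.a₁) / 4) := by
      rw [WeierstrassCurve.Affine.negY]
      field_simp
      ring
    refine ⟨WeierstrassCurve.Affine.Point.some _ _ hns, ?_⟩
    haveI : Fact (Nat.Prime 2) := ⟨Nat.prime_two⟩
    refine addOrderOf_eq_prime ?_ ?_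
    · rw [two_nsmul]
      exact WeierstrassCurve.Affine.Point.add_self_of_Y_eq hy
    · intro h
      exact (WeierstrassCurve.Affine.Point.some_ne_zero hns) h
end

section
/- Let M be an even unimodular lattice, S ⊆ M primitive with orthogonal complement K, and γ : S∨/S ≅ K∨/K the glue isomorphism. Isometries α of S and β of K extend to an isometry of M if and only if the induced maps on discriminant groups satisfy β̄ ∘ γ = γ ∘ ᾱ. -/
open Module

/-- Auxiliary generic form of Nikulin's extension criterion, over an arbitrary
principal ideal domain. -/
theorem nikulin_aux {R : Type*} [CommRing R] [IsDomain R] [IsPrincipalIdealRing R]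
    {M : Type*} [AddCommGroup M] [Module R M]
    [Module.Free R M] [Module.Finite R M]
    (B : LinearMap.BilinForm R M)
    (hsymm : ∀ x y : M, B x y = B y x)
    (hunim : Function.Bijective B)
    (S : Submodule R M)
    (K : Submodule R M) (hK : K = B.orthogonal S)
    (hdisj : Disjoint S K)
    (dS : M →ₗ[R] Module.Dual R S) (hdS : ∀ (x : M) (s : S), dS x s = B x s)
    (dK : M →ₗ[R] Module.Dual R K) (hdK : ∀ (x : M) (y : K), dK x y = B x y)
    (α : S ≃ₗ[R] S) (hα : ∀ s t : S, B (α s) (α t) = B s t)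
    (β : K ≃ₗ[R] K) (hβ : ∀ s t : K, B (β s) (β t) = B s t) :
    (∃ σ : M ≃ₗ[R] M, (∀ x y : M, B (σ x) (σ y) = B x y) ∧
        (∀ s : S, σ s = α s) ∧ (∀ y : K, σ y = β y)) ↔
      (∀ x : M, ∃ y : M,
        (Submodule.map dS S).mkQ (dS y) =
          (Submodule.map dS S).mkQ ((dS x) ∘ₗ (α.symm : S →ₗ[R] S)) ∧
        (Submodule.map dK K).mkQ (dK y) =
          (Submodule.map dK K).mkQ ((dK x) ∘ₗ (β.symm : K →ₗ[R] K))) := by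
  classical
  -- membership in K
  have hmemK : ∀ x : M, x ∈ K ↔ ∀ s ∈ S, B s x = 0 := fun x => by
    rw [hK]; exact Iff.rfl
  have hSK : ∀ s ∈ S, ∀ k ∈ K, B s k = 0 := fun s hs k hk => (hmemK k).mp hk s hs
  have hKS : ∀ k ∈ K, ∀ s ∈ S, B k s = 0 := fun k hk s hs => by
    rw [hsymm]; exact hSK s hs k hk
  -- a basis for S
  obtain ⟨n, bS⟩ := S.basisOfPid (Module.Free.chooseBasis R M)
  -- the images of the basis vectors span S inside M
  have hspan : Submodule.span R (Set.range fun j => (bS j : M)) = S := by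
    have h1 : (Set.range fun j => (bS j : M)) = S.subtype '' Set.range bS := by
      rw [← Set.range_comp]; rfl
    rw [h1, ← Submodule.map_span, bS.span_eq, Submodule.map_top, Submodule.range_subtype]
  -- bilinearity over finite sums of basis vectors
  have hBl : ∀ (c : Fin n → R) (x : M),
      B (∑ j, c j • (bS j : M)) x = ∑ j, c j * B (bS j : M) x := by
    intro c x
    rw [map_sum, LinearMap.sum_apply]
    exact Finset.sum_congr rfl fun j _ => LinearMap.BilinForm.smul_left _ _ _
  -- vanishing on the basis implies vanishing on S
  have horthS : ∀ z : M, (∀ j, B z (bS j : M) = 0) → ∀ t ∈ S, B z t = 0 := by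
    intro z hz t ht
    rw [← hspan] at ht
    induction ht using Submodule.span_induction with
    | mem x hx => obtain ⟨j, rfl⟩ := hx; exact hz j
    | zero => simp
    | add x y _ _ hx hy => rw [map_add, hx, hy, add_zero]
    | smul a x _ hx => rw [map_smul, hx, smul_zero]
  -- the Gram matrix of S
  set G : Matrix (Fin n) (Fin n) R := fun i j => B (bS i : M) (bS j : M) with hGdef
  -- the basis vectors are linearly independent in M
  have hliM : LinearIndependent R (fun j => (bS j : M)) :=
    bS.linearIndependent.map' S.subtype S.ker_subtype
  have hdet : G.det ≠ 0 := by
    intro h0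
    obtain ⟨v, hv, hGv⟩ := Matrix.exists_mulVec_eq_zero_iff.mpr h0
    have hbs : ∀ i, B (∑ j, v j • (bS j : M)) (bS i : M) = 0 := by
      intro i
      rw [hBl]
      have hGvi : ∑ j, G i j * v j = 0 := by
        simpa [Matrix.mulVec, dotProduct] using congrFun hGv i
      rw [← hGvi]
      refine Finset.sum_congr rfl fun j _ => ?_
      simp only [hGdef]
      rw [hsymm ((bS j : M)) ((bS i : M)), mul_comm]
    have hmemS : (∑ j, v j • (bS j : M)) ∈ S :=
      Submodule.sum_mem _ fun j _ => Submodule.smul_mem _ _ (bS j).2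
    have hmemKk : (∑ j, v j • (bS j : M)) ∈ K := by
      rw [hmemK]
      intro t ht
      rw [hsymm]
      exact horthS _ hbs t ht
    have hsum0 : ∑ j, v j • (bS j : M) = 0 :=
      Submodule.disjoint_def.mp hdisj _ hmemS hmemKk
    exact hv (funext (Fintype.linearIndependent_iff.mp hliM v hsum0))
  -- S + K has finite index in M
  have hfin : ∀ m : M, ∃ c : R, c ≠ 0 ∧ c • m ∈ S ⊔ K := by
    intro m
    refine ⟨G.det, hdet, ?_⟩
    set w : Fin n → R := fun i => B m (bS i : M) with hwdef
    set v : Fin n → R := G.adjugate.mulVec w with hvdef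
    set sM : M := ∑ i, v i • (bS i : M) with hsMdef
    have h2 : ∀ j, ∑ i, v i * B (bS i : M) (bS j : M) = G.det * w j := by
      intro j
      have hGv : G.mulVec v = G.det • w := by
        rw [hvdef, Matrix.mulVec_mulVec, Matrix.mul_adjugate, Matrix.smul_mulVec,
          Matrix.one_mulVec]
      have hj := congrFun hGv j
      simp only [Matrix.mulVec, dotProduct, Pi.smul_apply, smul_eq_mul] at hj
      rw [← hj]
      refine Finset.sum_congr rfl fun i _ => ?_
      simp only [hGdef]
      rw [hsymm ((bS i : M)) ((bS j : M)), mul_comm]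
    have key : ∀ j, B (G.det • m - sM) (bS j : M) = 0 := by
      intro j
      rw [LinearMap.BilinForm.sub_left, LinearMap.BilinForm.smul_left, hsMdef, hBl, h2 j,
        hwdef]
      ring
    have hmemS : sM ∈ S := by
      rw [hsMdef]
      exact Submodule.sum_mem _ fun i _ => Submodule.smul_mem _ _ (bS i).2
    have hmemKz : (G.det • m - sM) ∈ K := by
      rw [hmemK]
      intro t ht
      rw [hsymm]
      exact horthS _ key t ht
    have hrw : sM + (G.det • m - sM) = G.det • m := by abel
    rw [← hrw]
    exact Submodule.add_mem_sup hmemS hmemKz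
  -- an element orthogonal to both S and K is zero
  have huniq0 : ∀ z : M, (∀ s ∈ S, B z s = 0) → (∀ k ∈ K, B z k = 0) → z = 0 := by
    intro z h1 h2
    have hBz : B z = 0 := by
      ext m
      obtain ⟨c, hc, hm⟩ := hfin m
      obtain ⟨s, hs, k, hk, hsk⟩ := Submodule.mem_sup.mp hm
      have hz : c * B z m = 0 := by
        have h3 : B z (c • m) = B z (s + k) := by rw [hsk]
        simpa [map_add, map_smul, h1 s hs, h2 k hk, smul_eq_mul] using h3
      simpa using (mul_eq_zero.mp hz).resolve_left hc
    exact hunim.1 (by rw [hBz, map_zero])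
  -- uniqueness given pairings with S and K
  have huniq : ∀ z z' : M, (∀ s : S, B z (s : M) = B z' (s : M)) →
      (∀ k : K, B z (k : M) = B z' (k : M)) → z = z' := by
    intro z z' h1 h2
    have h0 : z - z' = 0 := by
      refine huniq0 (z - z') (fun s hs => ?_) (fun k hk => ?_)
      · rw [map_sub, LinearMap.sub_apply, h1 ⟨s, hs⟩, sub_self]
      · rw [map_sub, LinearMap.sub_apply, h2 ⟨k, hk⟩, sub_self]
    exact sub_eq_zero.mp h0
  constructor
  · -- forward direction: σ x works
    rintro ⟨σ, hσB, hσS, hσK⟩ x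
    refine ⟨σ x, ?_, ?_⟩
    · congr 1
      ext s
      simp only [LinearMap.comp_apply, LinearEquiv.coe_coe]
      have hfix : σ ((α.symm s : S) : M) = (s : M) := by
        rw [hσS (α.symm s)]
        exact congrArg _ (α.apply_symm_apply s)
      calc dS (σ x) s = B (σ x) (s : M) := hdS _ _
        _ = B (σ x) (σ ((α.symm s : S) : M)) := by rw [hfix]
        _ = B x ((α.symm s : S) : M) := hσB _ _
        _ = dS x (α.symm s) := (hdS _ _).symm
    · congr 1
      ext k
      simp only [LinearMap.comp_apply, LinearEquiv.coe_coe]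
      have hfix : σ ((β.symm k : K) : M) = (k : M) := by
        rw [hσK (β.symm k)]
        exact congrArg _ (β.apply_symm_apply k)
      calc dK (σ x) k = B (σ x) (k : M) := hdK _ _
        _ = B (σ x) (σ ((β.symm k : K) : M)) := by rw [hfix]
        _ = B x ((β.symm k : K) : M) := hσB _ _
        _ = dK x (β.symm k) := (hdK _ _).symm
  · -- backward direction: construct σ
    intro h
    -- existence of an element with the prescribed pairings
    have hPex : ∀ x : M, ∃ z : M, (∀ s : S, B z (s : M) = B x ((α.symm s : S) : M)) ∧
        (∀ k : K, B z (k : M) = B x ((β.symm k : K) : M)) := by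
      intro x
      obtain ⟨y, h1, h2⟩ := h x
      rw [Submodule.mkQ_apply, Submodule.mkQ_apply, Submodule.Quotient.eq] at h1 h2
      obtain ⟨s, hs, hseq⟩ := Submodule.mem_map.mp h1
      obtain ⟨k, hk, hkeq⟩ := Submodule.mem_map.mp h2
      refine ⟨y - s - k, fun t => ?_, fun u => ?_⟩
      · have hst := LinearMap.congr_fun hseq t
        simp only [LinearMap.sub_apply, LinearMap.comp_apply, LinearEquiv.coe_coe] at hst
        rw [hdS s t, hdS y t, hdS x (α.symm t)] at hst
        have hkt : B k (t : M) = 0 := hKS k hk _ t.2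
        have hexp : B (y - s - k) (t : M) = B y t - B s t - B k t := by
          rw [map_sub, map_sub, LinearMap.sub_apply, LinearMap.sub_apply]
        rw [hexp, hkt, hst]
        ring
      · have hku := LinearMap.congr_fun hkeq u
        simp only [LinearMap.sub_apply, LinearMap.comp_apply, LinearEquiv.coe_coe] at hku
        rw [hdK k u, hdK y u, hdK x (β.symm u)] at hku
        have hsu : B s (u : M) = 0 := hSK s hs _ u.2
        have hexp : B (y - s - k) (u : M) = B y u - B s u - B k u := by
          rw [map_sub, map_sub, LinearMap.sub_apply, LinearMap.sub_apply]
        rw [hexp, hsu, hku]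
        ring
    choose σf hσf1 hσf2 using hPex
    -- σf is additive and R-linear
    have hadd : ∀ x y : M, σf (x + y) = σf x + σf y := by
      intro x y
      refine huniq _ _ (fun t => ?_) (fun u => ?_)
      · rw [map_add, LinearMap.add_apply, hσf1 x t, hσf1 y t, hσf1 (x + y) t, map_add,
          LinearMap.add_apply]
      · rw [map_add, LinearMap.add_apply, hσf2 x u, hσf2 y u, hσf2 (x + y) u, map_add,
          LinearMap.add_apply]
    have hsmul : ∀ (c : R) (x : M), σf (c • x) = c • σf x := by
      intro c x
      refine huniq _ _ (fun t => ?_) (fun u => ?_)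
      · rw [map_smul, LinearMap.smul_apply, hσf1 x t, hσf1 (c • x) t, map_smul,
          LinearMap.smul_apply]
      · rw [map_smul, LinearMap.smul_apply, hσf2 x u, hσf2 (c • x) u, map_smul,
          LinearMap.smul_apply]
    set σ : M →ₗ[R] M :=
      { toFun := σf, map_add' := hadd, map_smul' := hsmul } with hσdef
    have hσapp : ∀ x : M, σ x = σf x := fun _ => rfl
    -- σ restricted to S is α
    have hres : ∀ s : S, σf (s : M) = ((α s : S) : M) := by
      intro s
      refine huniq _ _ (fun t => ?_) (fun u => ?_)
      · rw [hσf1 (s : M) t]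
        have h5 := hα s (α.symm t)
        rw [α.apply_symm_apply] at h5
        exact h5.symm
      · rw [hσf2 (s : M) u]
        rw [hSK _ s.2 _ (β.symm u).2, hSK _ (α s).2 _ u.2]
    -- σ restricted to K is β
    have hresK : ∀ k : K, σf (k : M) = ((β k : K) : M) := by
      intro k
      refine huniq _ _ (fun t => ?_) (fun u => ?_)
      · rw [hσf1 (k : M) t]
        rw [hKS _ k.2 _ (α.symm t).2, hKS _ (β k).2 _ t.2]
      · rw [hσf2 (k : M) u]
        have h5 := hβ k (β.symm u)
        rw [β.apply_symm_apply] at h5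
        exact h5.symm
    -- σ is an isometry
    have hiso : ∀ x y : M, B (σf x) (σf y) = B x y := by
      intro x y
      obtain ⟨c, hc, hm⟩ := hfin y
      obtain ⟨s, hs, k, hk, hsk⟩ := Submodule.mem_sup.mp hm
      have e1 : c * B (σf x) (σf y) = c * B x y := by
        calc c * B (σf x) (σf y) = B (σf x) (c • σf y) := by
              rw [map_smul, smul_eq_mul]
          _ = B (σf x) (σf (c • y)) := by rw [hsmul]
          _ = B (σf x) (σf (s + k)) := by rw [hsk]
          _ = B (σf x) (σf s + σf k) := by rw [hadd]
          _ = B (σf x) (σf s) + B (σf x) (σf k) := by rw [map_add]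
          _ = B (σf x) ((α ⟨s, hs⟩ : S) : M) + B (σf x) ((β ⟨k, hk⟩ : K) : M) := by
              rw [hres ⟨s, hs⟩, hresK ⟨k, hk⟩]
          _ = B x ((α.symm (α ⟨s, hs⟩) : S) : M) + B x ((β.symm (β ⟨k, hk⟩) : K) : M) := by
              rw [hσf1 x (α ⟨s, hs⟩), hσf2 x (β ⟨k, hk⟩)]
          _ = B x s + B x k := by rw [α.symm_apply_apply, β.symm_apply_apply]
          _ = B x (c • y) := by rw [← map_add, hsk]
          _ = c * B x y := by rw [map_smul, smul_eq_mul]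
      exact mul_left_cancel₀ hc e1
    -- σ is bijective
    have key : ∀ x : M, σ.dualMap (B (σ x)) = B x := by
      intro x
      ext y
      simpa [LinearMap.dualMap_apply, hσapp] using hiso x y
    have hsurjD : Function.Surjective (σ.dualMap : Dual R M →ₗ[R] Dual R M) := by
      intro f
      obtain ⟨x, hx⟩ := hunim.2 f
      exact ⟨B (σ x), by rw [key, hx]⟩
    have hinjD : Function.Injective (σ.dualMap : Dual R M →ₗ[R] Dual R M) :=
      OrzechProperty.injective_of_surjective_endomorphism _ hsurjD
    have hbij : Function.Bijective σ := by
      constructor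
      · intro x y hxy
        apply hunim.1
        rw [← key x, ← key y, hxy]
      · intro z
        obtain ⟨x, hx⟩ := hunim.2 (σ.dualMap (B z))
        refine ⟨x, ?_⟩
        have h1 : σ.dualMap (B (σ x)) = σ.dualMap (B z) := by rw [key, hx]
        exact hunim.1 (hinjD h1)
    refine ⟨LinearEquiv.ofBijective σ hbij, fun x y => ?_, fun s => ?_, fun k => ?_⟩
    · simpa only [LinearEquiv.ofBijective_apply, hσapp] using hiso x y
    · simpa only [LinearEquiv.ofBijective_apply, hσapp] using hres s
    · simpa only [LinearEquiv.ofBijective_apply, hσapp] using hresK k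

/-- Nikulin's extension criterion for even unimodular lattices: isometries `α` of a primitive
sublattice `S` and `β` of its orthogonal complement `K` extend to an isometry of `M` if and
only if the induced maps on the discriminant groups `S∨/S` and `K∨/K` commute with the glue
isomorphism `γ`; here the condition `β̄ ∘ γ = γ ∘ ᾱ` is expressed by saying that the image
under `(ᾱ, β̄)` of the graph of `γ` (the classes of `(B(x,·)|_S, B(x,·)|_K)` for `x ∈ M`)
is again contained in the graph of `γ`. -/
theorem stmt_9 {M : Type*} [AddCommGroup M] [Module ℤ M]
    [Module.Free ℤ M] [Module.Finite ℤ M]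
    (B : LinearMap.BilinForm ℤ M)
    (hsymm : ∀ x y : M, B x y = B y x)
    (heven : ∀ x : M, Even (B x x))
    (hunim : Function.Bijective B)
    (S : Submodule ℤ M)
    (hprim : ∀ (x : M) (n : ℤ), n ≠ 0 → n • x ∈ S → x ∈ S)
    (K : Submodule ℤ M) (hK : K = B.orthogonal S)
    (hdisj : Disjoint S K)
    (dS : M →ₗ[ℤ] Module.Dual ℤ S) (hdS : ∀ (x : M) (s : S), dS x s = B x s)
    (dK : M →ₗ[ℤ] Module.Dual ℤ K) (hdK : ∀ (x : M) (y : K), dK x y = B x y)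
    (α : S ≃ₗ[ℤ] S) (hα : ∀ s t : S, B (α s) (α t) = B s t)
    (β : K ≃ₗ[ℤ] K) (hβ : ∀ s t : K, B (β s) (β t) = B s t) :
    (∃ σ : M ≃ₗ[ℤ] M, (∀ x y : M, B (σ x) (σ y) = B x y) ∧
        (∀ s : S, σ s = α s) ∧ (∀ y : K, σ y = β y)) ↔
      (∀ x : M, ∃ y : M,
        (Submodule.map dS S).mkQ (dS y) =
          (Submodule.map dS S).mkQ ((dS x) ∘ₗ (α.symm : S →ₗ[ℤ] S)) ∧
        (Submodule.map dK K).mkQ (dK y) =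
          (Submodule.map dK K).mkQ ((dK x) ∘ₗ (β.symm : K →ₗ[ℤ] K))) := by
  have eS : (AddCommGroup.toIntModule ↥S) = S.module :=
    letI := AddCommGroup.uniqueIntModule (M := ↥S); Subsingleton.elim _ _
  have eK : (AddCommGroup.toIntModule ↥K) = K.module :=
    letI := AddCommGroup.uniqueIntModule (M := ↥K); Subsingleton.elim _ _
  revert α hα β hβ dS hdS dK hdK
  rw [eS, eK]
  intro dS hdS dK hdK α hα β hβ
  exact nikulin_aux B hsymm hunim S K hK hdisj dS hdS dK hdK α hα β hβ
end
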